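/- Let 𝒯, 𝒯' be normalised 2-head Büchi transducers over disjoint alphabets Σin and Σout, viewed as Büchi automata over Σ = Σin ∪ Σout with distribution σ(a) = 1 for a ∈ Σin and σ(a) = 2 otherwise. If 𝒯 ⊑(ω,ω) 𝒯' then R(𝒯) ⊆ R(𝒯'). -/

import Mathlib

open scoped Classical

/-- A Büchi automaton over alphabet `S`. -/
structure BA (S : Type) where
  Q : Type
  init : Q
  trans : Q → S → Q → Prop
  acc : Q → Prop

/-- The Büchi language of `A`: infinite words with a run from the initial state
visiting accepting states infinitely often. -/
def BA.Lang {S : Type} (A : BA S) : Set (ℕ → S) :=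
  { w | ∃ ρ : ℕ → A.Q, ρ 0 = A.init ∧ (∀ n, A.trans (ρ n) (w n) (ρ (n+1))) ∧
        ∀ n, ∃ m, n ≤ m ∧ A.acc (ρ m) }

/-- A configuration of the two-buffer simulation game: Spoiler's state, contents of
the two FIFO buffers (head = oldest letter), Duplicator's state. -/
structure Cfg {S : Type} (A B : BA S) where
  qa : A.Q
  b1 : List S
  b2 : List S
  qb : B.Q

/-- The configuration after Spoiler's move `m = (a, q')`: his state becomes `q'` and
the letter `a` is appended to buffer `σ a` (`true` = buffer 1, `false` = buffer 2). -/
def midCfg {S : Type} {A B : BA S} (σ : S → Bool) (c : Cfg A B) (m : S × A.Q) : Cfg A B :=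
  ⟨m.2, if σ m.1 then c.b1 ++ [m.1] else c.b1, if σ m.1 then c.b2 else c.b2 ++ [m.1], c.qb⟩

/-- Applying a finite sequence of Duplicator consumption steps: each step picks a buffer
(`true` = buffer 1) and a successor state, consuming the oldest letter of that buffer
along a matching transition of `B`.  Returns `none` if some step is illegal. -/
noncomputable def dupApply {S : Type} (A B : BA S) :
    Cfg A B → List (Bool × B.Q) → Option (Cfg A B)
  | c, [] => some c
  | c, (j, p') :: ms =>
    if j then
      match c.b1 with
      | [] => none
      | b :: β => if B.trans c.qb b p' then dupApply A B ⟨c.qa, β, c.b2, p'⟩ ms else none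
    else
      match c.b2 with
      | [] => none
      | b :: β => if B.trans c.qb b p' then dupApply A B ⟨c.qa, c.b1, β, p'⟩ ms else none

/-- The configuration at the start of round `n` (i.e. after Duplicator's moves of
round `n-1`), given Spoiler's moves `sp` and Duplicator's responses `dm`;
`none` once an illegal move has occurred. -/
noncomputable def playCfg {S : Type} (A B : BA S) (σ : S → Bool)
    (sp : ℕ → S × A.Q) (dm : ℕ → List (Bool × B.Q)) : ℕ → Option (Cfg A B)
  | 0 => some ⟨A.init, [], [], B.init⟩
  | n+1 =>
    match playCfg A B σ sp dm n with
    | none => none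
    | some c =>
      if A.trans c.qa (sp n).1 (sp n).2 then dupApply A B (midCfg σ c (sp n)) (dm n) else none

/-- Number of letters put into buffer `j` by Spoiler during the first `n` rounds. -/
noncomputable def pushed {S : Type} {QA : Type} (σ : S → Bool) (sp : ℕ → S × QA)
    (j : Bool) (n : ℕ) : ℕ :=
  ((Finset.range n).filter fun i => σ (sp i).1 = j).card

/-- Number of letters consumed from buffer `j` by Duplicator during the first `n` rounds. -/
noncomputable def consumed {QB : Type} (dm : ℕ → List (Bool × QB)) (j : Bool) (n : ℕ) : ℕ :=
  ∑ i ∈ Finset.range n, ((dm i).filter fun x => x.1 = j).length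

/-- Duplicator's strategy is consistent with the moves `dm` of a play. -/
def Consistent {S : Type} (A B : BA S)
    (dstrat : List ((S × A.Q) × List (Bool × B.Q)) → (S × A.Q) → List (Bool × B.Q))
    (sp : ℕ → S × A.Q) (dm : ℕ → List (Bool × B.Q)) : Prop :=
  ∀ n, dm n = dstrat (List.ofFn fun i : Fin n => (sp i, dm i)) (sp n)

/-- Spoiler's moves are legal as long as the play is defined. -/
def SpLegal {S : Type} (A B : BA S) (σ : S → Bool)
    (sp : ℕ → S × A.Q) (dm : ℕ → List (Bool × B.Q)) : Prop :=
  ∀ n c, playCfg A B σ sp dm n = some c → A.trans c.qa (sp n).1 (sp n).2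

/-- Duplicator's winning condition for a play of the two-buffer game with
capacities `(k1, k2)`: the buffers never exceed their capacities (checked after her
moves), and either Spoiler's run visits accepting states only finitely often, or
every letter put into a buffer is eventually consumed and Duplicator's run visits
accepting states infinitely often. -/
def Win2 {S : Type} (A B : BA S) (σ : S → Bool) (k1 k2 : ℕ∞)
    (sp : ℕ → S × A.Q) (dm : ℕ → List (Bool × B.Q)) : Prop :=
  (∀ n c, playCfg A B σ sp dm n = some c →
      (c.b1.length : ℕ∞) ≤ k1 ∧ (c.b2.length : ℕ∞) ≤ k2) ∧
  ((∃ N, ∀ n, N ≤ n → ¬ A.acc (sp n).2) ∨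
    ((∀ n j, ∃ m, pushed σ sp j n ≤ consumed dm j m) ∧
     (∀ n, ∃ m, n ≤ m ∧ ∃ x ∈ dm m, B.acc x.2)))

/-- `dstrat` is a winning strategy for Duplicator in the two-buffer simulation game on
`A`, `B` with letter distribution `σ` and capacities `(k1, k2)`: against every legal
behaviour of Spoiler, all of Duplicator's prescribed moves are legal (the play never
breaks) and the resulting play is won by Duplicator. -/
def WinningStrat2 {S : Type} (A B : BA S) (σ : S → Bool) (k1 k2 : ℕ∞)
    (dstrat : List ((S × A.Q) × List (Bool × B.Q)) → (S × A.Q) → List (Bool × B.Q)) : Prop :=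
  ∀ sp dm, Consistent A B dstrat sp dm → SpLegal A B σ sp dm →
    (∀ n, (playCfg A B σ sp dm n).isSome) ∧ Win2 A B σ k1 k2 sp dm

/-- Two-buffer simulation `A ⊑(k1,k2) B`: Duplicator has a winning strategy. -/
def Sim2 {S : Type} (A B : BA S) (σ : S → Bool) (k1 k2 : ℕ∞) : Prop :=
  ∃ dstrat, WinningStrat2 A B σ k1 k2 dstrat
/-- The concatenation of the infinite sequence of finite words `g 0, g 1, g 2, …`,
as a finite or infinite word represented by a function `ℕ → Option α`
(`iConcat g k = some a` iff the concatenation has an `k`-th letter and it is `a`). -/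
noncomputable def iConcat {α : Type} (g : ℕ → List α) : ℕ → Option α := fun k =>
  if h : ∃ m, k < ((List.range m).map g).flatten.length
  then ((List.range h.choose).map g).flatten[k]?
  else none

/-- The projection of an infinite word `w` onto the letters of buffer index `j`
(i.e. onto the sub-alphabet `σ⁻¹(j)`), as a finite or infinite word. -/
noncomputable def projW {S : Type} (σ : S → Bool) (j : Bool) (w : ℕ → S) : ℕ → Option S :=
  iConcat fun n => if σ (w n) = j then [w n] else []
/-- A 2-head Büchi transducer with input alphabet `Si` and output alphabet `So`. -/
structure Trd (Si So : Type) where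
  Q : Type
  init : Q
  delta : Set (Q × List Si × List So × Q)
  acc : Q → Prop

/-- A transducer is normalised if every transition consumes exactly one letter,
either from the input or from the output alphabet. -/
def Trd.Normalised {Si So : Type} (T : Trd Si So) : Prop :=
  ∀ t ∈ T.delta, (∃ a, t.2.1 = [a] ∧ t.2.2.1 = []) ∨ (t.2.1 = [] ∧ ∃ b, t.2.2.1 = [b])

/-- The infinitary rational relation recognised by `T`: pairs of finite-or-infinite
words `(u, v)` obtained by concatenating the input parts and the output parts of an
accepting run. -/
def Trd.Rel {Si So : Type} (T : Trd Si So) : Set ((ℕ → Option Si) × (ℕ → Option So)) :=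
  { p | ∃ (ρ : ℕ → T.Q) (us : ℕ → List Si) (vs : ℕ → List So),
      ρ 0 = T.init ∧ (∀ n, (ρ n, us n, vs n, ρ (n+1)) ∈ T.delta) ∧
      (∀ n, ∃ m, n ≤ m ∧ T.acc (ρ m)) ∧ p.1 = iConcat us ∧ p.2 = iConcat vs }

/-- A (normalised) transducer viewed as a Büchi automaton over `Si ⊕ So`. -/
def Trd.toBA {Si So : Type} (T : Trd Si So) : BA (Si ⊕ So) where
  Q := T.Q
  init := T.init
  trans := fun q x q' =>
    match x with
    | Sum.inl a => (q, [a], [], q') ∈ T.delta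
    | Sum.inr b => (q, [], [b], q') ∈ T.delta
  acc := T.acc


/-!
Let Spoiler play an accepting run of `T` on a word `w` that interleaves the input and output
letters of a pair `(u, v) ∈ R(T)` (such a `w` exists because `T` is normalised), and let
Duplicator answer with her winning strategy. The letters she consumes, in order, form an
accepting run of `T'` on a word `w'`. Each buffer is a FIFO queue, so what she has read from
buffer `j` is always a prefix of what Spoiler has pushed into it; as every pushed letter is
eventually consumed, `w'` and `w` have the same projections on both buffers, i.e. `w'` also
spells `(u, v)`, and the run of `T'` on `w'` witnesses `(u, v) ∈ R(T')`.
-/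

theorem List.length_filter_eq_true_add_eq_false {α : Type} (l : List α) (f : α → Bool) :
    (l.filter (f · = true)).length + (l.filter (f · = false)).length = l.length := by
  rw [List.length_eq_length_filter_add (fun x => decide (f x = true)) (l := l)]
  simp

section iConcat

variable {α β : Type}

noncomputable def prefixConcat (g : ℕ → List α) (m : ℕ) : List α :=
  ((List.range m).map g).flatten

theorem prefixConcat_succ (g : ℕ → List α) (m : ℕ) :
    prefixConcat g (m + 1) = prefixConcat g m ++ g m := by
  simp [prefixConcat, List.range_succ]

theorem prefixConcat_isPrefix (g : ℕ → List α) {m n : ℕ} (h : m ≤ n) :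
    prefixConcat g m <+: prefixConcat g n :=
  Nat.rel_of_forall_rel_succ_of_le _
    (fun k => by rw [prefixConcat_succ]; exact List.prefix_append _ _) h

theorem prefixConcat_map (f : α → β) (g : ℕ → List α) (m : ℕ) :
    prefixConcat (fun n => (g n).map f) m = (prefixConcat g m).map f := by
  simp [prefixConcat, List.map_flatten, Function.comp_def]

theorem getElem?_prefixConcat_of_le (g : ℕ → List α) {k m n : ℕ} (hmn : m ≤ n)
    (h : k < (prefixConcat g m).length) : (prefixConcat g n)[k]? = (prefixConcat g m)[k]? := by
  obtain ⟨t, e⟩ := prefixConcat_isPrefix g hmn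
  rw [← e, List.getElem?_append_left h]

theorem iConcat_eq_of_lt (g : ℕ → List α) {k m : ℕ} (h : k < (prefixConcat g m).length) :
    iConcat g k = (prefixConcat g m)[k]? := by
  have hex : ∃ m, k < ((List.range m).map g).flatten.length := ⟨m, h⟩
  rw [iConcat, dif_pos hex]
  change (prefixConcat g hex.choose)[k]? = _
  rw [← getElem?_prefixConcat_of_le g (le_max_left _ m) hex.choose_spec,
    getElem?_prefixConcat_of_le g (le_max_right _ m) h]

theorem iConcat_eq_none (g : ℕ → List α) {k : ℕ} (h : ∀ m, (prefixConcat g m).length ≤ k) :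
    iConcat g k = none := by
  rw [iConcat, dif_neg]
  simpa [prefixConcat] using h

theorem iConcat_eq_of_isPrefix {g g' : ℕ → List α}
    (h : ∀ m, ∃ m', prefixConcat g m <+: prefixConcat g' m') {k m : ℕ}
    (hk : k < (prefixConcat g m).length) : iConcat g k = iConcat g' k := by
  obtain ⟨m', t, e⟩ := h m
  have hk' : k < (prefixConcat g' m').length := by rw [← e, List.length_append]; omega
  rw [iConcat_eq_of_lt g hk, iConcat_eq_of_lt g' hk', ← e, List.getElem?_append_left hk]

theorem iConcat_congr {g g' : ℕ → List α}
    (h : ∀ m, ∃ m', prefixConcat g m <+: prefixConcat g' m')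
    (h' : ∀ m, ∃ m', prefixConcat g' m <+: prefixConcat g m') :
    iConcat g = iConcat g' := by
  funext k
  by_cases hex : ∃ m, k < (prefixConcat g m).length
  · exact iConcat_eq_of_isPrefix h hex.choose_spec
  by_cases hex' : ∃ m, k < (prefixConcat g' m).length
  · exact (iConcat_eq_of_isPrefix h' hex'.choose_spec).symm
  simp only [not_exists, not_lt] at hex hex'
  rw [iConcat_eq_none g hex, iConcat_eq_none g' hex']

theorem iConcat_map (f : α → β) (g : ℕ → List α) :
    iConcat (fun n => (g n).map f) = fun k => (iConcat g k).map f := by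
  funext k
  by_cases hex : ∃ m, k < (prefixConcat g m).length
  · obtain ⟨m, hm⟩ := hex
    have hm' : k < (prefixConcat (fun n => (g n).map f) m).length := by
      rwa [prefixConcat_map, List.length_map]
    rw [iConcat_eq_of_lt _ hm', iConcat_eq_of_lt g hm, prefixConcat_map, List.getElem?_map]
  · simp only [not_exists, not_lt] at hex
    rw [iConcat_eq_none g hex, iConcat_eq_none]
    · rfl
    · simpa [prefixConcat_map] using hex

theorem exists_getElem_prefixConcat_eq {g : ℕ → List α}
    (hunb : ∀ k, ∃ n, k < (prefixConcat g n).length) :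
    ∃ t : ℕ → α, ∀ n k (hk : k < (prefixConcat g n).length), (prefixConcat g n)[k] = t k := by
  choose N hN using hunb
  refine ⟨fun k => (prefixConcat g (N k))[k]'(hN k), fun n k hk => ?_⟩
  rcases le_total n (N k) with h | h
  · exact (prefixConcat_isPrefix g h).getElem hk
  · exact ((prefixConcat_isPrefix g h).getElem (hN k)).symm

end iConcat

section Projection

variable {S : Type}

def prefixProj (σ : S → Bool) (j : Bool) (w : ℕ → S) (n : ℕ) : List S :=
  ((List.range n).map w).filter (σ · = j)

theorem prefixProj_succ (σ : S → Bool) (j : Bool) (w : ℕ → S) (n : ℕ) :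
    prefixProj σ j w (n + 1) = prefixProj σ j w n ++ if σ (w n) = j then [w n] else [] := by
  by_cases h : σ (w n) = j <;> simp [prefixProj, List.range_succ, h]

theorem prefixProj_isPrefix (σ : S → Bool) (j : Bool) (w : ℕ → S) {m n : ℕ} (h : m ≤ n) :
    prefixProj σ j w m <+: prefixProj σ j w n :=
  Nat.rel_of_forall_rel_succ_of_le _
    (fun k => by rw [prefixProj_succ]; exact List.prefix_append _ _) h

theorem prefixConcat_projW (σ : S → Bool) (j : Bool) (w : ℕ → S) (n : ℕ) :
    prefixConcat (fun n => if σ (w n) = j then [w n] else []) n = prefixProj σ j w n := by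
  induction n with
  | zero => rfl
  | succ n ih => rw [prefixConcat_succ, ih, prefixProj_succ]

theorem projW_eq_of_isPrefix {σ : S → Bool} {j : Bool} {v w : ℕ → S}
    (hpre : ∀ n, ∃ m, prefixProj σ j v n <+: prefixProj σ j w m)
    (hlen : ∀ n, ∃ m, (prefixProj σ j w n).length ≤ (prefixProj σ j v m).length) :
    projW σ j v = projW σ j w := by
  refine iConcat_congr (fun n => ?_) (fun n => ?_) <;> simp only [prefixConcat_projW]
  · exact hpre n
  · obtain ⟨m, hm⟩ := hlen n
    obtain ⟨m', hm'⟩ := hpre m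
    refine ⟨m, List.prefix_of_prefix_length_le (l₃ := prefixProj σ j w (max n m')) ?_ ?_ hm⟩
    · exact prefixProj_isPrefix σ j w (le_max_left n m')
    · exact hm'.trans (prefixProj_isPrefix σ j w (le_max_right n m'))

end Projection

namespace BA

variable {S : Type} (B : BA S)

/-- `B.Path q l q'`: `l` lists the letters read and the states entered along a path of `B`
from `q` to `q'`. -/
def Path : B.Q → List (S × B.Q) → B.Q → Prop
  | q, [], q' => q = q'
  | q, (a, r) :: l, q' => B.trans q a r ∧ Path r l q'

variable {B}

theorem Path.append {q₀ q₁ q₂ : B.Q} {l₁ l₂ : List (S × B.Q)} (h₁ : B.Path q₀ l₁ q₁)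
    (h₂ : B.Path q₁ l₂ q₂) : B.Path q₀ (l₁ ++ l₂) q₂ := by
  induction l₁ generalizing q₀ with
  | nil => cases h₁; exact h₂
  | cons x l ih => exact ⟨h₁.1, ih h₁.2⟩

theorem Path.trans_getElem {q q' : B.Q} {l : List (S × B.Q)} (h : B.Path q l q') {k : ℕ}
    (hk : k < l.length) :
    B.trans ((q :: l.map Prod.snd)[k]'(by simp; omega)) l[k].1 l[k].2 := by
  induction l generalizing q k with
  | nil => simp at hk
  | cons x l ih =>
    cases k with
    | zero => exact h.1
    | succ k => simpa using ih h.2 (by simpa using hk)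

theorem mem_lang_of_paths {P : ℕ → List (S × B.Q)} {t : ℕ → S × B.Q}
    (ht : ∀ n k (hk : k < (P n).length), (P n)[k] = t k) (hunb : ∀ k, ∃ n, k < (P n).length)
    (hpath : ∀ n, ∃ q, B.Path B.init (P n) q) (hacc : ∀ N, ∃ k, N ≤ k ∧ B.acc (t k).2) :
    (fun k => (t k).1) ∈ B.Lang := by
  let ρ : ℕ → B.Q
    | 0 => B.init
    | k + 1 => (t k).2
  refine ⟨ρ, rfl, fun k => ?_, fun N => ?_⟩
  · obtain ⟨n, hn⟩ := hunb k
    obtain ⟨q, hq⟩ := hpath n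
    have htr := hq.trans_getElem hn
    rw [ht n k hn] at htr
    cases k with
    | zero => exact htr
    | succ k => simpa [ht n k (by omega)] using htr
  · obtain ⟨k, hk, hacc⟩ := hacc N
    exact ⟨k + 1, by omega, hacc⟩

end BA

section Game

variable {S : Type} {A B : BA S}

def Cfg.buf (c : Cfg A B) : Bool → List S
  | true => c.b1
  | false => c.b2

theorem midCfg_buf (σ : S → Bool) (c : Cfg A B) (m : S × A.Q) (j : Bool) :
    (midCfg σ c m).buf j = c.buf j ++ if σ m.1 = j then [m.1] else [] := by
  cases j <;> cases h : σ m.1 <;> simp [midCfg, Cfg.buf, h]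

theorem dupApply_cons_eq_some {c c' : Cfg A B} {j : Bool} {p : B.Q} {ms : List (Bool × B.Q)}
    (h : dupApply A B c ((j, p) :: ms) = some c') :
    ∃ a c₁, B.trans c.qb a p ∧ c₁.qa = c.qa ∧ c₁.qb = p ∧ c.buf j = a :: c₁.buf j ∧
      c.buf (!j) = c₁.buf (!j) ∧ dupApply A B c₁ ms = some c' := by
  obtain ⟨qa, b1, b2, qb⟩ := c
  cases j
  · cases b2 with
    | nil => simp [dupApply] at h
    | cons a β =>
      rw [dupApply] at h
      simp only [Bool.false_eq_true, if_false] at h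
      split at h
      · exact ⟨a, ⟨qa, b1, β, p⟩, by assumption, rfl, rfl, rfl, rfl, h⟩
      · simp at h
  · cases b1 with
    | nil => simp [dupApply] at h
    | cons a β =>
      rw [dupApply] at h
      simp only [if_true] at h
      split at h
      · exact ⟨a, ⟨qa, β, b2, p⟩, by assumption, rfl, rfl, rfl, rfl, h⟩
      · simp at h

theorem dupApply_eq_some {c c' : Cfg A B} {ms : List (Bool × B.Q)}
    (h : dupApply A B c ms = some c') :
    ∃ l : List (Bool × S × B.Q), l.map (fun x => (x.1, x.2.2)) = ms ∧
      B.Path c.qb (l.map Prod.snd) c'.qb ∧ c'.qa = c.qa ∧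
      ∀ j, c.buf j = (l.filter (·.1 = j)).map (·.2.1) ++ c'.buf j := by
  induction ms generalizing c with
  | nil =>
    cases Option.some.inj h
    exact ⟨[], rfl, rfl, rfl, fun j => rfl⟩
  | cons m ms ih =>
    obtain ⟨j, p⟩ := m
    obtain ⟨a, c₁, htr, hqa, rfl, hbuf, hbuf', h₁⟩ := dupApply_cons_eq_some h
    obtain ⟨l, hl, hpath, hqa', hbuf₁⟩ := ih h₁
    refine ⟨(j, a, c₁.qb) :: l, by simp [hl], ⟨htr, hpath⟩, hqa'.trans hqa, fun j' => ?_⟩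
    obtain rfl | rfl := (Bool.eq_or_eq_not j' j)
    · simp [hbuf, hbuf₁ j']
    · simp [hbuf', hbuf₁ (!j)]

theorem playCfg_succ_eq_some {σ : S → Bool} {sp : ℕ → S × A.Q} {dm : ℕ → List (Bool × B.Q)}
    {n : ℕ} {c' : Cfg A B} (h : playCfg A B σ sp dm (n + 1) = some c') :
    ∃ c, playCfg A B σ sp dm n = some c ∧ dupApply A B (midCfg σ c (sp n)) (dm n) = some c' := by
  rw [playCfg] at h
  cases hc : playCfg A B σ sp dm n with
  | none => simp [hc] at h
  | some c =>
    simp only [hc] at h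
    split at h
    · exact ⟨c, rfl, h⟩
    · simp at h

theorem exists_consistent
    (dstrat : List ((S × A.Q) × List (Bool × B.Q)) → (S × A.Q) → List (Bool × B.Q))
    (sp : ℕ → S × A.Q) : ∃ dm, Consistent A B dstrat sp dm := by
  let hist : ℕ → List ((S × A.Q) × List (Bool × B.Q)) :=
    fun n => Nat.rec [] (fun k H => H ++ [(sp k, dstrat H (sp k))]) n
  refine ⟨fun n => dstrat (hist n) (sp n), fun n => ?_⟩
  suffices hist n = List.ofFn fun i : Fin n => (sp i, dstrat (hist i) (sp i)) from
    congrArg (dstrat · (sp n)) this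
  induction n with
  | zero => rfl
  | succ n ih =>
    change hist n ++ _ = _
    rw [ih, List.ofFn_succ_last]
    rfl

theorem spLegal_of_run {σ : S → Bool} {w : ℕ → S} {ρ : ℕ → A.Q} (h₀ : ρ 0 = A.init)
    (htr : ∀ n, A.trans (ρ n) (w n) (ρ (n + 1))) (dm : ℕ → List (Bool × B.Q)) :
    SpLegal A B σ (fun n => (w n, ρ (n + 1))) dm := by
  rintro (_ | n) c hc
  · cases Option.some.inj hc
    simpa [h₀] using htr 0
  · obtain ⟨c₀, -, hc₀⟩ := playCfg_succ_eq_some hc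
    obtain ⟨-, -, -, hqa, -⟩ := dupApply_eq_some hc₀
    simpa [hqa, midCfg] using htr (n + 1)

/-- `seg n` records Duplicator's moves of round `n` as triples
(buffer, letter consumed, state entered). -/
theorem exists_trace_of_playCfg_isSome {σ : S → Bool} {sp : ℕ → S × A.Q}
    {dm : ℕ → List (Bool × B.Q)} (hplay : ∀ n, (playCfg A B σ sp dm n).isSome) :
    ∃ seg : ℕ → List (Bool × S × B.Q), (∀ n, (seg n).map (fun x => (x.1, x.2.2)) = dm n) ∧
      (∀ n, ∃ q, B.Path B.init ((prefixConcat seg n).map Prod.snd) q) ∧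
      ∀ n j, ((prefixConcat seg n).filter (·.1 = j)).map (·.2.1) <+:
        prefixProj σ j (fun i => (sp i).1) n := by
  choose c hc using fun n => Option.isSome_iff_exists.mp (hplay n)
  have hstep : ∀ n, dupApply A B (midCfg σ (c n) (sp n)) (dm n) = some (c (n + 1)) := by
    intro n
    obtain ⟨c₀, h₀, h⟩ := playCfg_succ_eq_some (hc (n + 1))
    rw [hc n, Option.some_inj] at h₀
    rwa [h₀]
  choose seg hmap hpath _ hbuf using fun n => dupApply_eq_some (hstep n)
  have hinv : ∀ n, B.Path B.init ((prefixConcat seg n).map Prod.snd) (c n).qb ∧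
      ∀ j, prefixProj σ j (fun i => (sp i).1) n =
        ((prefixConcat seg n).filter (·.1 = j)).map (·.2.1) ++ (c n).buf j := by
    intro n
    induction n with
    | zero =>
      have hc₀ : c 0 = ⟨A.init, [], [], B.init⟩ := (Option.some.inj (hc 0)).symm
      rw [hc₀]
      exact ⟨rfl, fun j => by cases j <;> rfl⟩
    | succ n ih =>
      refine ⟨?_, fun j => ?_⟩
      · rw [prefixConcat_succ, List.map_append]
        exact ih.1.append (hpath n)
      · rw [prefixProj_succ, ih.2 j, List.append_assoc, ← midCfg_buf, hbuf n j,
          prefixConcat_succ, List.filter_append, List.map_append, List.append_assoc]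
  exact ⟨seg, hmap, fun n => ⟨_, (hinv n).1⟩, fun n j => ⟨_, ((hinv n).2 j).symm⟩⟩

end Game

section Word

variable {S : Type} {B : BA S}

theorem pushed_eq_length_prefixProj {QA : Type} (σ : S → Bool) (sp : ℕ → S × QA) (j : Bool)
    (n : ℕ) : pushed σ sp j n = (prefixProj σ j (fun i => (sp i).1) n).length := by
  induction n with
  | zero => rfl
  | succ n ih =>
    rw [pushed, Finset.card_filter, Finset.sum_range_succ, ← Finset.card_filter, ← pushed, ih,
      prefixProj_succ]
    split <;> simp

theorem consumed_eq_length_filter {QB : Type} (dm : ℕ → List (Bool × QB)) (j : Bool) (n : ℕ) :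
    consumed dm j n = ((prefixConcat dm n).filter (·.1 = j)).length := by
  induction n with
  | zero => rfl
  | succ n ih =>
    rw [consumed, Finset.sum_range_succ, ← consumed, ih, prefixConcat_succ, List.filter_append,
      List.length_append]

theorem exists_lt_length_prefixConcat {γ : Type} {σ : S → Bool} {w : ℕ → S}
    {seg : ℕ → List (Bool × γ)}
    (hcons : ∀ n j, ∃ m,
      (prefixProj σ j w n).length ≤ ((prefixConcat seg m).filter (·.1 = j)).length)
    (k : ℕ) : ∃ n, k < (prefixConcat seg n).length := by
  have hmono : ∀ (j : Bool) {m n}, m ≤ n → ((prefixConcat seg m).filter (·.1 = j)).length ≤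
      ((prefixConcat seg n).filter (·.1 = j)).length :=
    fun j _ _ h => ((prefixConcat_isPrefix seg h).filter _).length_le
  obtain ⟨m₁, h₁⟩ := hcons (k + 1) true
  obtain ⟨m₂, h₂⟩ := hcons (k + 1) false
  refine ⟨max m₁ m₂, ?_⟩
  have := hmono true (le_max_left m₁ m₂)
  have := hmono false (le_max_right m₁ m₂)
  have := (prefixConcat seg (max m₁ m₂)).length_filter_eq_true_add_eq_false Prod.fst
  have := ((List.range (k + 1)).map w).length_filter_eq_true_add_eq_false σ
  simp only [prefixProj, List.length_map, List.length_range] at *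
  omega

theorem fst_eq_of_mem_of_isPrefix {γ : Type} {σ : S → Bool} {w : ℕ → S} {n : ℕ}
    {D : List (Bool × S × γ)} (h : ∀ j, (D.filter (·.1 = j)).map (·.2.1) <+: prefixProj σ j w n)
    {x : Bool × S × γ} (hx : x ∈ D) : σ x.2.1 = x.1 := by
  have hmem : x.2.1 ∈ prefixProj σ x.1 w n :=
    (h x.1).subset (List.mem_map_of_mem (List.mem_filter.mpr ⟨hx, by simp⟩))
  simpa [prefixProj] using (List.mem_filter.mp hmem).2

theorem prefixProj_eq_map_filter {γ : Type} {σ : S → Bool} {j : Bool} {D : List (Bool × S × γ)}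
    {t : ℕ → Bool × S × γ} (ht : ∀ k (hk : k < D.length), D[k] = t k)
    (htag : ∀ x ∈ D, σ x.2.1 = x.1) :
    prefixProj σ j (fun k => (t k).2.1) D.length = (D.filter (·.1 = j)).map (·.2.1) := by
  have hv : (List.range D.length).map (fun k => (t k).2.1) = D.map (·.2.1) :=
    List.ext_getElem (by simp) fun k h₁ _ => by simp [← ht k (by simpa using h₁)]
  rw [prefixProj, hv, List.filter_map]
  congr 1
  exact List.filter_congr fun x hx => by simp [htag x hx]

theorem exists_mem_lang_projW_eq_of_trace {σ : S → Bool} {w : ℕ → S}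
    {seg : ℕ → List (Bool × S × B.Q)}
    (hpath : ∀ n, ∃ q, B.Path B.init ((prefixConcat seg n).map Prod.snd) q)
    (hbuf : ∀ n j, ((prefixConcat seg n).filter (·.1 = j)).map (·.2.1) <+: prefixProj σ j w n)
    (hcons : ∀ n j, ∃ m,
      (prefixProj σ j w n).length ≤ ((prefixConcat seg m).filter (·.1 = j)).length)
    (hacc : ∀ n, ∃ m, n ≤ m ∧ ∃ x ∈ seg m, B.acc x.2.2) :
    ∃ v ∈ B.Lang, ∀ j, projW σ j v = projW σ j w := by
  set D := prefixConcat seg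
  have hunb : ∀ k, ∃ n, k < (D n).length := exists_lt_length_prefixConcat hcons
  obtain ⟨t, ht⟩ : ∃ t : ℕ → Bool × S × B.Q, ∀ n k (hk : k < (D n).length), (D n)[k] = t k :=
    exists_getElem_prefixConcat_eq hunb
  refine ⟨fun k => (t k).2.1, ?_, fun j => ?_⟩
  · refine BA.mem_lang_of_paths (P := fun n => (D n).map Prod.snd) (t := fun k => (t k).2)
      (fun n k hk => by simp [ht]) (by simpa using hunb) hpath fun N => ?_
    obtain ⟨n, hn⟩ := hunb N
    obtain ⟨m, hm, x, hx, hxacc⟩ := hacc n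
    obtain ⟨i, hi, rfl⟩ := List.getElem_of_mem hx
    have hlt : (D m).length + i < (D (m + 1)).length := by
      simp [D, prefixConcat_succ, hi]
    refine ⟨(D m).length + i, ?_, ?_⟩
    · have : (D n).length ≤ (D m).length := (prefixConcat_isPrefix seg hm).length_le
      omega
    · rw [← ht (m + 1) _ hlt]
      simpa [D, prefixConcat_succ, List.getElem_append_right] using hxacc
  · have hproj : ∀ n, prefixProj σ j (fun k => (t k).2.1) (D n).length =
        ((D n).filter (·.1 = j)).map (·.2.1) := fun n =>
      prefixProj_eq_map_filter (ht n) fun _ => fst_eq_of_mem_of_isPrefix (hbuf n)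
    refine projW_eq_of_isPrefix (fun n => ?_) (fun n => ?_)
    · obtain ⟨N, hN⟩ := hunb n
      exact ⟨N, (prefixProj_isPrefix σ j _ hN.le).trans (hproj N ▸ hbuf N j)⟩
    · obtain ⟨m, hm⟩ := hcons n j
      exact ⟨(D m).length, by rwa [hproj, List.length_map]⟩

end Word

theorem Sim2.exists_mem_lang_projW_eq {S : Type} {A B : BA S} {σ : S → Bool} {k₁ k₂ : ℕ∞}
    (h : Sim2 A B σ k₁ k₂) {w : ℕ → S} (hw : w ∈ A.Lang) :
    ∃ v ∈ B.Lang, ∀ j, projW σ j v = projW σ j w := by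
  obtain ⟨ρ, hρ₀, htr, hacc⟩ := hw
  obtain ⟨dstrat, hstrat⟩ := h
  let sp : ℕ → S × A.Q := fun n => (w n, ρ (n + 1))
  obtain ⟨dm, hdm⟩ := exists_consistent dstrat sp
  obtain ⟨hplay, -, hwin⟩ := hstrat sp dm hdm (spLegal_of_run hρ₀ htr dm)
  obtain ⟨hcons, haccB⟩ : (∀ n j, ∃ m, pushed σ sp j n ≤ consumed dm j m) ∧
      ∀ n, ∃ m, n ≤ m ∧ ∃ x ∈ dm m, B.acc x.2 := by
    refine hwin.resolve_left fun ⟨N, hN⟩ => ?_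
    obtain ⟨m, hm, hacc⟩ := hacc (N + 1)
    obtain ⟨k, rfl⟩ : ∃ k, m = k + 1 := ⟨m - 1, by omega⟩
    exact hN k (by omega) hacc
  obtain ⟨seg, hmap, hpath, hbuf⟩ := exists_trace_of_playCfg_isSome hplay
  have hconsumed : ∀ j m, consumed dm j m = ((prefixConcat seg m).filter (·.1 = j)).length := by
    intro j m
    rw [consumed_eq_length_filter, ← funext hmap, prefixConcat_map, List.filter_map,
      List.length_map]
    rfl
  refine exists_mem_lang_projW_eq_of_trace hpath hbuf (fun n j => ?_) (fun n => ?_)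
  · obtain ⟨m, hm⟩ := hcons n j
    exact ⟨m, by rwa [pushed_eq_length_prefixProj, hconsumed] at hm⟩
  · obtain ⟨m, hm, x, hx, hxacc⟩ := haccB n
    rw [← hmap] at hx
    obtain ⟨y, hy, rfl⟩ := List.mem_map.mp hx
    exact ⟨m, hm, y, hy, hxacc⟩

section Transducer

variable {Si So : Type}

noncomputable def splitWord (w : ℕ → Si ⊕ So) : (ℕ → Option Si) × (ℕ → Option So) :=
  (iConcat fun n => (w n).getLeft?.toList, iConcat fun n => (w n).getRight?.toList)

theorem Trd.splitWord_mem_rel (T : Trd Si So) {w : ℕ → Si ⊕ So} (hw : w ∈ T.toBA.Lang) :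
    splitWord w ∈ T.Rel := by
  obtain ⟨ρ, hρ₀, htr, hacc⟩ := hw
  refine ⟨ρ, _, _, hρ₀, fun n => ?_, hacc, rfl, rfl⟩
  have := htr n
  cases hx : w n <;> simpa [hx, Trd.toBA] using this

theorem Trd.Normalised.exists_splitWord_eq {T : Trd Si So} (hT : T.Normalised)
    {p : (ℕ → Option Si) × (ℕ → Option So)} (hp : p ∈ T.Rel) :
    ∃ w ∈ T.toBA.Lang, splitWord w = p := by
  obtain ⟨ρ, us, vs, hρ₀, htr, hacc, hu, hv⟩ := hp
  have hletter : ∀ n, ∃ x : Si ⊕ So, us n = x.getLeft?.toList ∧ vs n = x.getRight?.toList := by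
    intro n
    rcases hT _ (htr n) with ⟨a, hus, hvs⟩ | ⟨hus, b, hvs⟩
    · exact ⟨Sum.inl a, by simpa using hus, by simpa using hvs⟩
    · exact ⟨Sum.inr b, by simpa using hus, by simpa using hvs⟩
  choose w hwu hwv using hletter
  refine ⟨w, ⟨ρ, hρ₀, fun n => ?_, hacc⟩, ?_⟩
  · have := htr n
    rw [hwu, hwv] at this
    cases hx : w n <;> simpa [hx, Trd.toBA] using this
  · rw [splitWord, ← funext hwu, ← funext hwv, ← hu, ← hv]

theorem projW_isLeft_true (w : ℕ → Si ⊕ So) :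
    projW Sum.isLeft true w = fun k => ((splitWord w).1 k).map Sum.inl := by
  rw [projW, splitWord, ← iConcat_map]
  congr
  funext n
  cases w n <;> rfl

theorem projW_isLeft_false (w : ℕ → Si ⊕ So) :
    projW Sum.isLeft false w = fun k => ((splitWord w).2 k).map Sum.inr := by
  rw [projW, splitWord, ← iConcat_map]
  congr
  funext n
  cases w n <;> rfl

theorem splitWord_eq_of_projW_eq {w w' : ℕ → Si ⊕ So}
    (h : ∀ j, projW Sum.isLeft j w = projW Sum.isLeft j w') : splitWord w = splitWord w' := by
  have hin := h true
  have hout := h false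
  rw [projW_isLeft_true, projW_isLeft_true] at hin
  rw [projW_isLeft_false, projW_isLeft_false] at hout
  exact Prod.ext (funext fun k => Option.map_injective Sum.inl_injective (congrFun hin k))
    (funext fun k => Option.map_injective Sum.inr_injective (congrFun hout k))

end Transducer

theorem sim2_implies_relation_inclusion_general {Si So : Type} (T T' : Trd Si So)
    (hT : T.Normalised)
    (h : Sim2 T.toBA T'.toBA (fun x => x.isLeft) ⊤ ⊤) :
    T.Rel ⊆ T'.Rel := by
  intro p hp
  obtain ⟨w, hw, rfl⟩ := hT.exists_splitWord_eq hp
  obtain ⟨v, hv, hproj⟩ := h.exists_mem_lang_projW_eq hw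
  rw [← splitWord_eq_of_projW_eq hproj]
  exact T'.splitWord_mem_rel hv

/-- For normalised 2-head Büchi transducers over disjoint input and
output alphabets, viewed as Büchi automata over `Σin ⊕ Σout` with input letters going
to buffer 1: `𝒯 ⊑(ω,ω) 𝒯'` implies `R(𝒯) ⊆ R(𝒯')`. -/
theorem sim2_implies_relation_inclusion {Si So : Type} (T T' : Trd Si So)
    (hT : T.Normalised) (hT' : T'.Normalised)
    (h : Sim2 T.toBA T'.toBA (fun x => x.isLeft) ⊤ ⊤) :
    T.Rel ⊆ T'.Rel :=
  sim2_implies_relation_inclusion_general T T' hT h
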